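/- arXiv:1009.5422 — 2 statements merged into one kernel-verified Lean document; each statement's English description precedes it below -/
import Mathlib

section
/- Suppose |B| ≥ |B|_c. Then for every frequency ξ ≠ 0 and every λ > 0 there is no nontrivial solution of the horizontal problem; that is, any function ψ satisfying the horizontal problem at frequency ξ with growth rate λ > 0 is identically zero on [−1,1]. -/
open MeasureTheory Set Filter Topology

noncomputable section

/-- The set of Rayleigh quotients defining the critical magnetic number `|B|_c`. -/
def BcSet (g ρp ρm : ℝ) : Set ℝ :=
  {r | ∃ φ : ℝ → ℝ, (∃ K, LipschitzWith K φ) ∧ φ (-1) = 0 ∧ φ 1 = 0 ∧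
    ¬ (∀ᵐ y ∂(volume.restrict (Icc (-1:ℝ) 1)), φ y = 0) ∧
    r = g * (ρp - ρm) * (φ 0) ^ 2 / ∫ y in (-1:ℝ)..1, (deriv φ y) ^ 2}

/-- The set of quotients defining the vertical critical frequency `|ξ|_{vc}^B`. -/
def XivcSet (g ρp ρm B : ℝ) : Set ℝ :=
  {r | ∃ φ : ℝ → ℝ, ContDiff ℝ 2 φ ∧ φ (-1) = 0 ∧ φ 1 = 0 ∧
    deriv φ (-1) = 0 ∧ deriv φ 1 = 0 ∧
    0 < g * (ρp - ρm) * (φ 0) ^ 2 - B ^ 2 * ∫ y in (-1:ℝ)..1, (deriv φ y) ^ 2 ∧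
    r = (B ^ 2 * ∫ y in (-1:ℝ)..1, (deriv (deriv φ) y) ^ 2) /
        (g * (ρp - ρm) * (φ 0) ^ 2 - B ^ 2 * ∫ y in (-1:ℝ)..1, (deriv φ y) ^ 2)}

/-- The set of quotients defining the horizontal critical frequency `|ξ|_{hc}^B`. -/
def XihcSet (g ρp ρm B : ℝ) : Set ℝ :=
  {r | ∃ φ : ℝ → ℝ, (∃ K, LipschitzWith K φ) ∧ φ (-1) = 0 ∧ φ 1 = 0 ∧
    ¬ (∀ᵐ y ∂(volume.restrict (Icc (-1:ℝ) 1)), φ y = 0) ∧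
    r = (g * (ρp - ρm) * (φ 0) ^ 2 - B ^ 2 * ∫ y in (-1:ℝ)..1, (deriv φ y) ^ 2) /
        (B ^ 2 * ∫ y in (-1:ℝ)..1, (φ y) ^ 2)}

/-- The fourth-order ODE of the vertical problem, with density `ρ` and viscosity `μ`. -/
def VertODE (ρ μ B ξ lam : ℝ) (f : ℝ → ℝ) (y : ℝ) : Prop :=
  -lam ^ 2 * ρ * (ξ ^ 2 * f y - iteratedDeriv 2 f y) =
    μ * lam * (ξ ^ 4 * f y - 2 * ξ ^ 2 * iteratedDeriv 2 f y + iteratedDeriv 4 f y) +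
      B ^ 2 * (-(ξ ^ 2) * iteratedDeriv 2 f y + iteratedDeriv 4 f y)

/-- The fourth-order ODE of the horizontal problem. -/
def HorizODE (ρ μ B ξ lam : ℝ) (f : ℝ → ℝ) (y : ℝ) : Prop :=
  -lam ^ 2 * ρ * (ξ ^ 2 * f y - iteratedDeriv 2 f y) =
    μ * lam * (ξ ^ 4 * f y - 2 * ξ ^ 2 * iteratedDeriv 2 f y + iteratedDeriv 4 f y) +
      B ^ 2 * (ξ ^ 4 * f y - ξ ^ 2 * iteratedDeriv 2 f y)

/-- `ψ : [-1,1] → ℝ` solves the vertical problem at frequency `ξ` with growth rate `lam`: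
its restrictions to `[-1,0]` and `[0,1]` are `C^n` up to the endpoints (i.e. agree there with
globally `C^n` functions `ψm`, `ψp`), `ψ` and `ψ'` are continuous at `0`, the interior ODEs,
the jump conditions at `0` and the boundary conditions at `±1` hold. -/
def IsVertSol (ρp ρm μp μm g B ξ lam : ℝ) (n : ℕ∞) (ψ : ℝ → ℝ) : Prop :=
  ∃ ψm ψp : ℝ → ℝ,
    ContDiff ℝ n ψm ∧ ContDiff ℝ n ψp ∧
    (∀ y ∈ Icc (-1:ℝ) 0, ψ y = ψm y) ∧
    (∀ y ∈ Icc (0:ℝ) 1, ψ y = ψp y) ∧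
    ψp 0 = ψm 0 ∧
    deriv ψp 0 = deriv ψm 0 ∧
    (∀ y ∈ Ioo (-1:ℝ) 0, VertODE ρm μm B ξ lam ψm y) ∧
    (∀ y ∈ Ioo (0:ℝ) 1, VertODE ρp μp B ξ lam ψp y) ∧
    (μp * lam * (ξ ^ 2 * ψp 0 + iteratedDeriv 2 ψp 0) + B ^ 2 * iteratedDeriv 2 ψp 0) -
        (μm * lam * (ξ ^ 2 * ψm 0 + iteratedDeriv 2 ψm 0) + B ^ 2 * iteratedDeriv 2 ψm 0) = 0 ∧
    (μp * lam * (iteratedDeriv 3 ψp 0 - 3 * ξ ^ 2 * deriv ψp 0) + B ^ 2 * iteratedDeriv 3 ψp 0) -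
        (μm * lam * (iteratedDeriv 3 ψm 0 - 3 * ξ ^ 2 * deriv ψm 0) + B ^ 2 * iteratedDeriv 3 ψm 0) =
      lam ^ 2 * (ρp * deriv ψp 0 - ρm * deriv ψm 0) + g * (ρp - ρm) * ξ ^ 2 * ψ 0 ∧
    ψ (-1) = 0 ∧ ψ 1 = 0 ∧ deriv ψm (-1) = 0 ∧ deriv ψp 1 = 0

/-- `ψ : [-1,1] → ℝ` solves the horizontal problem at frequency `ξ` with growth rate `lam`. -/
def IsHorizSol (ρp ρm μp μm g B ξ lam : ℝ) (n : ℕ∞) (ψ : ℝ → ℝ) : Prop :=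
  ∃ ψm ψp : ℝ → ℝ,
    ContDiff ℝ n ψm ∧ ContDiff ℝ n ψp ∧
    (∀ y ∈ Icc (-1:ℝ) 0, ψ y = ψm y) ∧
    (∀ y ∈ Icc (0:ℝ) 1, ψ y = ψp y) ∧
    ψp 0 = ψm 0 ∧
    deriv ψp 0 = deriv ψm 0 ∧
    (∀ y ∈ Ioo (-1:ℝ) 0, HorizODE ρm μm B ξ lam ψm y) ∧
    (∀ y ∈ Ioo (0:ℝ) 1, HorizODE ρp μp B ξ lam ψp y) ∧
    μp * lam * (ξ ^ 2 * ψp 0 + iteratedDeriv 2 ψp 0) -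
        μm * lam * (ξ ^ 2 * ψm 0 + iteratedDeriv 2 ψm 0) = 0 ∧
    μp * lam * (iteratedDeriv 3 ψp 0 - 3 * ξ ^ 2 * deriv ψp 0) -
        μm * lam * (iteratedDeriv 3 ψm 0 - 3 * ξ ^ 2 * deriv ψm 0) =
      lam ^ 2 * (ρp * deriv ψp 0 - ρm * deriv ψm 0) + g * (ρp - ρm) * ξ ^ 2 * ψ 0 ∧
    ψ (-1) = 0 ∧ ψ 1 = 0 ∧ deriv ψm (-1) = 0 ∧ deriv ψp 1 = 0

/-!
Multiplying the ODE by `ψ` and integrating by parts on each side of the interface, the jump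
conditions turn the boundary terms at `0` into `g[ρ]ξ²ψ(0)²`, which gives the energy identity
`λ²∫ρ(ξ²ψ² + ψ'²) + λ∫μ(|ψ'' + ξ²ψ|² + 4ξ²ψ'²) + B²ξ²∫(ξ²ψ² + ψ'²) = g[ρ]ξ²ψ(0)²`.
The two pieces of `ψ` glue to a Lipschitz test function for `|B|_c`, so
`g[ρ]ψ(0)² ≤ |B|_c² ∫ψ'² ≤ B² ∫ψ'²`; what remains of the energy controls `∫ψ²`, which must vanish.
-/

open intervalIntegral

theorem eqOn_zero_of_integral_sq_eq_zero {f : ℝ → ℝ} {a b : ℝ} (hab : a < b)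
    (hf : ContinuousOn f (Icc a b)) (h : ∫ x in a..b, f x ^ 2 = 0) : EqOn f 0 (Icc a b) := by
  have hsq : (fun x => f x ^ 2) =ᵐ[volume.restrict (Icc a b)] 0 := by
    rw [← Measure.restrict_congr_set Ioc_ae_eq_Icc]
    exact (integral_eq_zero_iff_of_le_of_nonneg_ae hab.le (ae_of_all _ fun x => sq_nonneg (f x))
      ((hf.pow 2).intervalIntegrable_of_Icc hab.le)).mp h
  intro x hx
  exact pow_eq_zero_iff two_ne_zero |>.mp
    (Measure.eqOn_Icc_of_ae_eq volume hab.ne hsq (hf.pow 2) continuousOn_const hx)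

theorem integral_deriv_sq_pos {f : ℝ → ℝ} {a b : ℝ} (hab : a < b) (hf : ContDiff ℝ 1 f)
    (hne : f a ≠ f b) : 0 < ∫ x in a..b, deriv f x ^ 2 := by
  refine (integral_nonneg hab.le fun x _ => sq_nonneg _).lt_of_ne fun h => hne ?_
  have hderiv :=
    eqOn_zero_of_integral_sq_eq_zero hab (hf.continuous_deriv le_rfl).continuousOn h.symm
  have hftc := integral_deriv_eq_sub (fun x _ => hf.differentiable one_ne_zero x)
    ((hf.continuous_deriv le_rfl).intervalIntegrable a b)
  rw [integral_congr (g := 0) (by rwa [uIcc_of_le hab.le])] at hftc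
  simp only [Pi.zero_apply, intervalIntegral.integral_zero] at hftc
  linarith

theorem exists_lipschitzWith_eqOn_Icc_of_lipschitzOnWith {f g : ℝ → ℝ} {a b c : ℝ}
    {Kf Kg : NNReal} (hab : a ≤ b) (hbc : b ≤ c) (hf : LipschitzOnWith Kf f (Icc a b))
    (hg : LipschitzOnWith Kg g (Icc b c)) (hfg : f b = g b) :
    ∃ φ : ℝ → ℝ, (∃ K, LipschitzWith K φ) ∧ EqOn φ f (Icc a b) ∧ EqOn φ g (Icc b c) := by
  refine ⟨fun x => IccExtend hab (domRestrict _ f) x + IccExtend hbc (domRestrict _ g) x - f b,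
    ⟨_, ((hf.to_restrict.comp (LipschitzWith.projIcc hab)).add
      (hg.to_restrict.comp (LipschitzWith.projIcc hbc))).sub (LipschitzWith.const _)⟩, ?_, ?_⟩
  · intro x hx
    simp [IccExtend_of_mem _ _ hx, IccExtend_of_le_left _ _ hx.2, hfg]
  · intro x hx
    simp [IccExtend_of_mem _ _ hx, IccExtend_of_right_le _ _ hx.1]

theorem integral_deriv_sq_eq_add_of_eqOn {φ f g : ℝ → ℝ} {a b c : ℝ} (hab : a ≤ b) (hbc : b ≤ c)
    (hφf : EqOn φ f (Icc a b)) (hφg : EqOn φ g (Icc b c))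
    (hf : IntervalIntegrable (fun x => deriv f x ^ 2) volume a b)
    (hg : IntervalIntegrable (fun x => deriv g x ^ 2) volume b c) :
    ∫ x in a..c, deriv φ x ^ 2 = (∫ x in a..b, deriv f x ^ 2) + ∫ x in b..c, deriv g x ^ 2 := by
  have hf' : EqOn (fun x => deriv φ x ^ 2) (fun x => deriv f x ^ 2) (uIoo a b) := by
    rw [uIoo_of_le hab]
    exact fun x hx => congrArg (· ^ 2) ((hφf.mono Ioo_subset_Icc_self).deriv isOpen_Ioo hx)
  have hg' : EqOn (fun x => deriv φ x ^ 2) (fun x => deriv g x ^ 2) (uIoo b c) := by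
    rw [uIoo_of_le hbc]
    exact fun x hx => congrArg (· ^ 2) ((hφg.mono Ioo_subset_Icc_self).deriv isOpen_Ioo hx)
  rw [← integral_add_adjacent_intervals (hf.congr_uIoo hf'.symm) (hg.congr_uIoo hg'.symm),
    integral_congr_uIoo hf', integral_congr_uIoo hg']

theorem mul_sq_le_sSup_BcSet_mul {g ρp ρm : ℝ} (hbdd : BddAbove (BcSet g ρp ρm)) {φ : ℝ → ℝ}
    (hφ : ∃ K, LipschitzWith K φ) (h_neg_one : φ (-1) = 0) (h_one : φ 1 = 0) (h0 : φ 0 ≠ 0)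
    (hD : 0 < ∫ y in (-1:ℝ)..1, deriv φ y ^ 2) :
    g * (ρp - ρm) * φ 0 ^ 2 ≤ sSup (BcSet g ρp ρm) * ∫ y in (-1:ℝ)..1, deriv φ y ^ 2 := by
  obtain ⟨K, hK⟩ := hφ
  have hnz : ¬ ∀ᵐ y ∂(volume.restrict (Icc (-1:ℝ) 1)), φ y = 0 := fun h =>
    h0 (Measure.eqOn_Icc_of_ae_eq volume (by norm_num) h hK.continuous.continuousOn
      continuousOn_const ⟨by norm_num, by norm_num⟩)
  rw [← div_le_iff₀ hD]
  exact le_csSup hbdd ⟨φ, ⟨K, hK⟩, h_neg_one, h_one, hnz, rfl⟩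

theorem mul_sq_le_of_sq_eq_sSup_BcSet {g ρp ρm Bc : ℝ} (hBc : 0 < Bc)
    (hBcsq : Bc ^ 2 = sSup (BcSet g ρp ρm)) {ψm ψp : ℝ → ℝ} (hm : ContDiff ℝ 1 ψm)
    (hp : ContDiff ℝ 1 ψp) (h0 : ψp 0 = ψm 0) (h_neg_one : ψm (-1) = 0) (h_one : ψp 1 = 0) :
    g * (ρp - ρm) * ψm 0 ^ 2 ≤
      Bc ^ 2 * ((∫ y in (-1:ℝ)..0, deriv ψm y ^ 2) + ∫ y in (0:ℝ)..1, deriv ψp y ^ 2) := by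
  have hCp : 0 ≤ ∫ y in (0:ℝ)..1, deriv ψp y ^ 2 :=
    integral_nonneg zero_le_one fun _ _ => sq_nonneg _
  by_cases hψ0 : ψm 0 = 0
  · have hCm : 0 ≤ ∫ y in (-1:ℝ)..0, deriv ψm y ^ 2 :=
      integral_nonneg (by norm_num) fun _ _ => sq_nonneg _
    rw [hψ0, zero_pow two_ne_zero, mul_zero]
    positivity
  have hbdd : BddAbove (BcSet g ρp ρm) := by
    by_contra h
    rw [Real.sSup_of_not_bddAbove h] at hBcsq
    exact hBc.ne' (pow_eq_zero_iff two_ne_zero |>.mp hBcsq)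
  have hCm : 0 < ∫ y in (-1:ℝ)..0, deriv ψm y ^ 2 :=
    integral_deriv_sq_pos (by norm_num) hm (by rw [h_neg_one]; exact Ne.symm hψ0)
  obtain ⟨Km, hKm⟩ :=
    hm.contDiffOn.exists_lipschitzOnWith one_ne_zero (convex_Icc (-1) 0) isCompact_Icc
  obtain ⟨Kp, hKp⟩ :=
    hp.contDiffOn.exists_lipschitzOnWith one_ne_zero (convex_Icc 0 1) isCompact_Icc
  obtain ⟨φ, hφ, hφm, hφp⟩ := exists_lipschitzWith_eqOn_Icc_of_lipschitzOnWith
    (by norm_num) zero_le_one hKm hKp h0.symm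
  have hD := integral_deriv_sq_eq_add_of_eqOn (by norm_num) zero_le_one hφm hφp
    (((hm.continuous_deriv le_rfl).pow 2).intervalIntegrable _ _)
    (((hp.continuous_deriv le_rfl).pow 2).intervalIntegrable _ _)
  have hφ0 : φ 0 = ψm 0 := hφm ⟨by norm_num, le_rfl⟩
  have hle := mul_sq_le_sSup_BcSet_mul hbdd hφ (by rw [hφm ⟨le_rfl, by norm_num⟩, h_neg_one])
    (by rw [hφp ⟨zero_le_one, le_rfl⟩, h_one]) (by rwa [hφ0]) (by rw [hD]; positivity)
  rwa [hD, hφ0, ← hBcsq] at hle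

-- Writing the dissipation as `|f'' + ξ²f|² + 4ξ²f'²` (not `f''² + 2ξ²f'² + ξ⁴f²`) puts `4μλξ²`
-- into the flux; with that coefficient the jump conditions cancel the viscous terms at `0`.
def horizFlux (ρ μ B ξ lam : ℝ) (f : ℝ → ℝ) (y : ℝ) : ℝ :=
  (lam ^ 2 * ρ + 4 * μ * lam * ξ ^ 2 + B ^ 2 * ξ ^ 2) * (deriv f y * f y) -
    μ * lam * (iteratedDeriv 3 f y * f y - iteratedDeriv 2 f y * deriv f y)

def horizEnergyDensity (ρ μ B ξ lam : ℝ) (f : ℝ → ℝ) (y : ℝ) : ℝ :=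
  (lam ^ 2 * ρ + B ^ 2 * ξ ^ 2) * (ξ ^ 2 * f y ^ 2 + deriv f y ^ 2) +
    μ * lam * ((iteratedDeriv 2 f y + ξ ^ 2 * f y) ^ 2 + 4 * ξ ^ 2 * deriv f y ^ 2)

section HorizontalEnergy

variable {ρ μ B ξ lam : ℝ} {f : ℝ → ℝ}

theorem ContDiff.hasDerivAt_iteratedDeriv {n : WithTop ℕ∞} (hf : ContDiff ℝ n f) {k : ℕ}
    (hk : k < n) (y : ℝ) : HasDerivAt (iteratedDeriv k f) (iteratedDeriv (k + 1) f y) y := by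
  rw [iteratedDeriv_succ]
  exact (hf.differentiable_iteratedDeriv k hk y).hasDerivAt

theorem hasDerivAt_horizFlux (hf : ContDiff ℝ 4 f) {y : ℝ} (hode : HorizODE ρ μ B ξ lam f y) :
    HasDerivAt (horizFlux ρ μ B ξ lam f) (horizEnergyDensity ρ μ B ξ lam f y) y := by
  have h0 := hf.hasDerivAt_iteratedDeriv (k := 0) (by norm_num) y
  have h1 := hf.hasDerivAt_iteratedDeriv (k := 1) (by norm_num) y
  have h2 := hf.hasDerivAt_iteratedDeriv (k := 2) (by norm_num) y
  have h3 := hf.hasDerivAt_iteratedDeriv (k := 3) (by norm_num) y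
  simp only [iteratedDeriv_zero, iteratedDeriv_one, Nat.reduceAdd] at h0 h1 h2 h3
  refine (((h1.mul h0).const_mul _).sub
    (((h3.mul h0).sub (h2.mul h1)).const_mul _)).congr_deriv ?_
  unfold horizEnergyDensity
  unfold HorizODE at hode
  linear_combination f y * hode

theorem integral_horizEnergyDensity (hf : ContDiff ℝ 4 f) {a b : ℝ} (hab : a ≤ b)
    (hode : ∀ y ∈ Ioo a b, HorizODE ρ μ B ξ lam f y) :
    ∫ y in a..b, horizEnergyDensity ρ μ B ξ lam f y =
      horizFlux ρ μ B ξ lam f b - horizFlux ρ μ B ξ lam f a := by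
  have hc0 : Continuous f := hf.continuous
  have hc1 : Continuous (deriv f) := hf.continuous_deriv (by norm_num)
  have hc2 : Continuous (iteratedDeriv 2 f) := hf.continuous_iteratedDeriv 2 (by norm_num)
  have hc3 : Continuous (iteratedDeriv 3 f) := hf.continuous_iteratedDeriv 3 (by norm_num)
  refine integral_eq_sub_of_hasDerivAt_of_le hab (by unfold horizFlux; fun_prop)
    (fun y hy => hasDerivAt_horizFlux hf (hode y hy))
    (Continuous.intervalIntegrable (by unfold horizEnergyDensity; fun_prop) _ _)

theorem horizFlux_eq_zero {y : ℝ} (h : f y = 0) (h' : deriv f y = 0) :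
    horizFlux ρ μ B ξ lam f y = 0 := by
  simp [horizFlux, h, h']

theorem horizFlux_sub_horizFlux_eq_of_jump {ρp ρm μp μm g : ℝ} {ψm ψp : ℝ → ℝ}
    (h0 : ψp 0 = ψm 0) (h0' : deriv ψp 0 = deriv ψm 0)
    (hJ1 : μp * lam * (ξ ^ 2 * ψp 0 + iteratedDeriv 2 ψp 0) -
        μm * lam * (ξ ^ 2 * ψm 0 + iteratedDeriv 2 ψm 0) = 0)
    (hJ2 : μp * lam * (iteratedDeriv 3 ψp 0 - 3 * ξ ^ 2 * deriv ψp 0) -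
        μm * lam * (iteratedDeriv 3 ψm 0 - 3 * ξ ^ 2 * deriv ψm 0) =
      lam ^ 2 * (ρp * deriv ψp 0 - ρm * deriv ψm 0) + g * (ρp - ρm) * ξ ^ 2 * ψm 0) :
    horizFlux ρm μm B ξ lam ψm 0 - horizFlux ρp μp B ξ lam ψp 0 =
      g * (ρp - ρm) * ξ ^ 2 * ψm 0 ^ 2 := by
  unfold horizFlux
  rw [h0] at hJ1 ⊢
  rw [h0'] at hJ2 ⊢
  linear_combination ψm 0 * hJ2 - deriv ψm 0 * hJ1

theorem integral_horizEnergyDensity_ge (hρ : 0 ≤ ρ) (hμ : 0 ≤ μ) (hlam : 0 ≤ lam)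
    (hf : ContDiff ℝ 2 f) {a b : ℝ} (hab : a ≤ b) :
    (lam ^ 2 * ρ + B ^ 2 * ξ ^ 2) * ξ ^ 2 * (∫ y in a..b, f y ^ 2) +
        B ^ 2 * ξ ^ 2 * (∫ y in a..b, deriv f y ^ 2) ≤
      ∫ y in a..b, horizEnergyDensity ρ μ B ξ lam f y := by
  have hc0 : Continuous f := hf.continuous
  have hc1 : Continuous (deriv f) := hf.continuous_deriv (by norm_num)
  have hc2 : Continuous (iteratedDeriv 2 f) := hf.continuous_iteratedDeriv 2 le_rfl
  rw [← intervalIntegral.integral_const_mul, ← intervalIntegral.integral_const_mul,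
    ← integral_add (Continuous.intervalIntegrable (by fun_prop) _ _)
      (Continuous.intervalIntegrable (by fun_prop) _ _)]
  refine integral_mono_on hab (Continuous.intervalIntegrable (by fun_prop) _ _)
    (Continuous.intervalIntegrable (by unfold horizEnergyDensity; fun_prop) _ _) fun y _ => ?_
  unfold horizEnergyDensity
  have hvisc :
      0 ≤ μ * lam * ((iteratedDeriv 2 f y + ξ ^ 2 * f y) ^ 2 + 4 * ξ ^ 2 * deriv f y ^ 2) := by
    positivity
  linarith [mul_nonneg (mul_nonneg (sq_nonneg lam) hρ) (sq_nonneg (deriv f y))]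

theorem integral_sq_eq_zero_of_integral_horizEnergyDensity_le {ρm ρp μm μp a b c d : ℝ}
    {ψm ψp : ℝ → ℝ} (hρm : 0 < ρm) (hρp : 0 < ρp) (hμm : 0 ≤ μm) (hμp : 0 ≤ μp) (hlam : 0 < lam)
    (hξ : ξ ≠ 0) (hm : ContDiff ℝ 2 ψm) (hp : ContDiff ℝ 2 ψp) (hab : a ≤ b) (hcd : c ≤ d)
    (hE : (∫ y in a..b, horizEnergyDensity ρm μm B ξ lam ψm y) +
        (∫ y in c..d, horizEnergyDensity ρp μp B ξ lam ψp y) ≤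
      B ^ 2 * ξ ^ 2 * ((∫ y in a..b, deriv ψm y ^ 2) + ∫ y in c..d, deriv ψp y ^ 2)) :
    (∫ y in a..b, ψm y ^ 2) = 0 ∧ (∫ y in c..d, ψp y ^ 2) = 0 := by
  have hAm : 0 ≤ ∫ y in a..b, ψm y ^ 2 := integral_nonneg hab fun _ _ => sq_nonneg _
  have hAp : 0 ≤ ∫ y in c..d, ψp y ^ 2 := integral_nonneg hcd fun _ _ => sq_nonneg _
  have hcm : 0 < (lam ^ 2 * ρm + B ^ 2 * ξ ^ 2) * ξ ^ 2 := by positivity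
  have hcp : 0 < (lam ^ 2 * ρp + B ^ 2 * ξ ^ 2) * ξ ^ 2 := by positivity
  have hsum : (lam ^ 2 * ρm + B ^ 2 * ξ ^ 2) * ξ ^ 2 * (∫ y in a..b, ψm y ^ 2) +
      (lam ^ 2 * ρp + B ^ 2 * ξ ^ 2) * ξ ^ 2 * (∫ y in c..d, ψp y ^ 2) ≤ 0 := by
    linarith [integral_horizEnergyDensity_ge (B := B) (ξ := ξ) hρm.le hμm hlam.le hm hab,
      integral_horizEnergyDensity_ge (B := B) (ξ := ξ) hρp.le hμp hlam.le hp hcd]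
  exact ⟨le_antisymm (le_of_mul_le_mul_left (by linarith [mul_nonneg hcp.le hAp]) hcm) hAm,
    le_antisymm (le_of_mul_le_mul_left (by linarith [mul_nonneg hcm.le hAm]) hcp) hAp⟩

end HorizontalEnergy

theorem horizontal_no_growing_mode_of_large_B_general
    (ρp ρm μp μm g B Bc : ℝ)
    (hρm : 0 < ρm) (hρ : ρm < ρp) (hμp : 0 < μp) (hμm : 0 < μm)
    (hBc : 0 < Bc) (hBcsq : Bc ^ 2 = sSup (BcSet g ρp ρm))
    (hBge : Bc ≤ |B|) :
    ∀ ξ : ℝ, ξ ≠ 0 → ∀ lam : ℝ, 0 < lam → ∀ ψ : ℝ → ℝ,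
      IsHorizSol ρp ρm μp μm g B ξ lam 4 ψ → ∀ y ∈ Icc (-1:ℝ) 1, ψ y = 0 := by
  intro ξ hξ lam hlam ψ ⟨ψm, ψp, hm, hp, hψm, hψp, h0, h0', hodem, hodep, hJ1, hJ2, hψ_neg_one,
    hψ_one, hdψm, hdψp⟩ y hy
  have hψm_neg_one : ψm (-1) = 0 := (hψm (-1) ⟨le_rfl, by norm_num⟩).symm.trans hψ_neg_one
  have hψp_one : ψp 1 = 0 := (hψp 1 ⟨zero_le_one, le_rfl⟩).symm.trans hψ_one
  rw [hψm 0 ⟨by norm_num, le_rfl⟩] at hJ2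
  have henergy : (∫ y in (-1:ℝ)..0, horizEnergyDensity ρm μm B ξ lam ψm y) +
      ∫ y in (0:ℝ)..1, horizEnergyDensity ρp μp B ξ lam ψp y =
        g * (ρp - ρm) * ξ ^ 2 * ψm 0 ^ 2 := by
    rw [integral_horizEnergyDensity hm (by norm_num) hodem,
      integral_horizEnergyDensity hp zero_le_one hodep, horizFlux_eq_zero hψm_neg_one hdψm,
      horizFlux_eq_zero hψp_one hdψp, ← horizFlux_sub_horizFlux_eq_of_jump h0 h0' hJ1 hJ2]
    ring
  have hrayleigh := mul_sq_le_of_sq_eq_sSup_BcSet hBc hBcsq (hm.of_le (by norm_num))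
    (hp.of_le (by norm_num)) h0 hψm_neg_one hψp_one
  have hBc_le_B : Bc ^ 2 ≤ B ^ 2 := by simpa using pow_le_pow_left₀ hBc.le hBge 2
  have hC : 0 ≤ (∫ y in (-1:ℝ)..0, deriv ψm y ^ 2) + ∫ y in (0:ℝ)..1, deriv ψp y ^ 2 :=
    add_nonneg (integral_nonneg (by norm_num) fun _ _ => sq_nonneg _)
      (integral_nonneg zero_le_one fun _ _ => sq_nonneg _)
  obtain ⟨hψm_zero, hψp_zero⟩ := integral_sq_eq_zero_of_integral_horizEnergyDensity_le
    (a := -1) (b := 0) (c := 0) (d := 1) hρm (hρm.trans hρ) hμm.le hμp.le hlam hξ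
    (hm.of_le (by norm_num)) (hp.of_le (by norm_num)) (by norm_num) zero_le_one (by
      rw [henergy]
      linarith [mul_le_mul_of_nonneg_left hrayleigh (sq_nonneg ξ),
        mul_le_mul_of_nonneg_right hBc_le_B (mul_nonneg hC (sq_nonneg ξ))])
  rcases le_total y 0 with hy0 | hy0
  · rw [hψm y ⟨hy.1, hy0⟩]
    exact eqOn_zero_of_integral_sq_eq_zero (by norm_num) hm.continuous.continuousOn hψm_zero
      ⟨hy.1, hy0⟩
  · rw [hψp y ⟨hy0, hy.2⟩]
    exact eqOn_zero_of_integral_sq_eq_zero (by norm_num) hp.continuous.continuousOn hψp_zero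
      ⟨hy0, hy.2⟩

/-- if `|B| ≥ |B|_c` then for every `ξ ≠ 0` and `λ > 0` every solution of the
horizontal problem vanishes identically on `[-1,1]`. -/
theorem horizontal_no_growing_mode_of_large_B
    (ρp ρm μp μm g B Bc : ℝ)
    (hρm : 0 < ρm) (hρ : ρm < ρp) (hμp : 0 < μp) (hμm : 0 < μm) (hg : 0 < g)
    (hB : B ≠ 0) (hBc : 0 < Bc) (hBcsq : Bc ^ 2 = sSup (BcSet g ρp ρm))
    (hBge : Bc ≤ |B|) :
    ∀ ξ : ℝ, ξ ≠ 0 → ∀ lam : ℝ, 0 < lam → ∀ ψ : ℝ → ℝ,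
      IsHorizSol ρp ρm μp μm g B ξ lam 4 ψ → ∀ y ∈ Icc (-1:ℝ) 1, ψ y = 0 :=
  horizontal_no_growing_mode_of_large_B_general ρp ρm μp μm g B Bc hρm hρ hμp hμm hBc hBcsq hBge

end
end

section
/- Regarded as a function of the magnetic number B on the interval (0, |B|_c), the vertical critical frequency satisfies the limits: |ξ|_{vc}^B → 0 as B → 0⁺, and |ξ|_{vc}^B → +∞ as B → |B|_c⁻. -/
open MeasureTheory Set Filter Topology

noncomputable section

/-!
Cauchy–Schwarz on `[-1, 0]` and on `[0, 1]` gives `2 φ(0)² ≤ ∫ φ'²` whenever `φ(±1) = 0`, with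
equality for the tent `1 - |y|`, so `|B|_c² = g[ρ]/2`. For an admissible `φ` this inequality and
the Poincaré inequality `∫ φ'² ≤ 4 ∫ φ''²` (from `φ'(-1) = 0`) bound every quotient defining
`(|ξ|_{vc}^B)²` below by `B² / (4 (|B|_c² - B²))`, which blows up as `B → |B|_c`; smoothings of
the tent show that admissible quotients exist for every `B < |B|_c`. As `B → 0`, the quotient of
one fixed admissible `φ` is `O(B²)`.
-/

theorem sq_intervalIntegral_le_mul_integral_sq {f : ℝ → ℝ} {a b : ℝ} (hab : a ≤ b)
    (hf : IntervalIntegrable f volume a b)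
    (hf2 : IntervalIntegrable (fun x => f x ^ 2) volume a b) :
    (∫ x in a..b, f x) ^ 2 ≤ (b - a) * ∫ x in a..b, f x ^ 2 := by
  set I := ∫ x in a..b, f x
  set J := ∫ x in a..b, f x ^ 2
  have hexpand : ∫ x in a..b, ((b - a) * f x - I) ^ 2 = (b - a) * ((b - a) * J - I ^ 2) := by
    have hpoly : ∀ x, ((b - a) * f x - I) ^ 2
        = (b - a) ^ 2 * f x ^ 2 - 2 * (b - a) * I * f x + I ^ 2 := fun x => by ring
    simp only [hpoly]
    rw [intervalIntegral.integral_add ((hf2.const_mul _).sub (hf.const_mul _))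
        intervalIntegrable_const, intervalIntegral.integral_sub (hf2.const_mul _)
        (hf.const_mul _)]
    simp only [intervalIntegral.integral_const_mul, intervalIntegral.integral_const,
      smul_eq_mul, I, J]
    ring
  have hnonneg : 0 ≤ (b - a) * ((b - a) * J - I ^ 2) :=
    hexpand ▸ intervalIntegral.integral_nonneg hab fun x _ => sq_nonneg _
  rcases hab.eq_or_lt with rfl | hlt
  · simp [I]
  · nlinarith [nonneg_of_mul_nonneg_right hnonneg (sub_pos.2 hlt)]

theorem two_mul_sq_integral_le_integral_sq {f : ℝ → ℝ}
    (hf : IntervalIntegrable f volume (-1) 1)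
    (hf2 : IntervalIntegrable (fun x => f x ^ 2) volume (-1) 1)
    (hzero : ∫ x in (-1:ℝ)..1, f x = 0) :
    2 * (∫ x in (-1:ℝ)..0, f x) ^ 2 ≤ ∫ x in (-1:ℝ)..1, f x ^ 2 := by
  have hsub₁ : uIcc (-1:ℝ) 0 ⊆ uIcc (-1) 1 := uIcc_subset_uIcc (by simp) (by simp)
  have hsub₂ : uIcc (0:ℝ) 1 ⊆ uIcc (-1) 1 := uIcc_subset_uIcc (by simp) (by simp)
  have hleft := sq_intervalIntegral_le_mul_integral_sq (by norm_num) (hf.mono_set hsub₁)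
    (hf2.mono_set hsub₁)
  have hright := sq_intervalIntegral_le_mul_integral_sq (by norm_num) (hf.mono_set hsub₂)
    (hf2.mono_set hsub₂)
  rw [← intervalIntegral.integral_add_adjacent_intervals (hf.mono_set hsub₁) (hf.mono_set hsub₂),
    add_eq_zero_iff_eq_neg'] at hzero
  rw [← intervalIntegral.integral_add_adjacent_intervals (hf2.mono_set hsub₁)
    (hf2.mono_set hsub₂)]
  rw [hzero, neg_sq] at hright
  linarith

theorem AbsolutelyContinuousOnInterval.two_mul_sq_le_integral_deriv_sq {φ : ℝ → ℝ}
    (hφ : AbsolutelyContinuousOnInterval φ (-1) 1)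
    (hφ' : IntervalIntegrable (fun x => deriv φ x ^ 2) volume (-1) 1)
    (hm1 : φ (-1) = 0) (h1 : φ 1 = 0) :
    2 * φ 0 ^ 2 ≤ ∫ x in (-1:ℝ)..1, deriv φ x ^ 2 := by
  have hleft := (hφ.mono (uIcc_subset_uIcc (by simp) (by simp) : uIcc (-1:ℝ) 0 ⊆ _))
  have h := two_mul_sq_integral_le_integral_sq hφ.intervalIntegrable_deriv hφ'
    (by rw [hφ.integral_deriv_eq_sub, hm1, h1, sub_zero])
  rwa [hleft.integral_deriv_eq_sub, hm1, sub_zero] at h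

theorem integral_sq_le_sq_mul_integral_deriv_sq {v : ℝ → ℝ} {a b : ℝ} (hab : a ≤ b)
    (hv : ContDiff ℝ 1 v) (ha : v a = 0) :
    ∫ x in a..b, v x ^ 2 ≤ (b - a) ^ 2 * ∫ x in a..b, deriv v x ^ 2 := by
  set N := ∫ x in a..b, deriv v x ^ 2
  have hv' : Continuous (deriv v) := hv.continuous_deriv le_rfl
  have hpointwise : ∀ y ∈ Icc a b, v y ^ 2 ≤ (b - a) * N := by
    intro y ⟨hay, hyb⟩
    have hftc : ∫ x in a..y, deriv v x = v y := by
      rw [intervalIntegral.integral_deriv_eq_sub (fun x _ => hv.differentiable one_ne_zero x)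
        (hv'.intervalIntegrable _ _), ha, sub_zero]
    have hcs := sq_intervalIntegral_le_mul_integral_sq hay (hv'.intervalIntegrable _ _)
      ((hv'.pow 2).intervalIntegrable _ _)
    have hsplit := intervalIntegral.integral_add_adjacent_intervals
      (f := fun x => deriv v x ^ 2) (μ := volume) ((hv'.pow 2).intervalIntegrable a y)
      ((hv'.pow 2).intervalIntegrable y b)
    have h₁ := intervalIntegral.integral_nonneg (μ := volume) hay
      fun x _ => sq_nonneg (deriv v x)
    have h₂ := intervalIntegral.integral_nonneg (μ := volume) hyb
      fun x _ => sq_nonneg (deriv v x)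
    rw [hftc] at hcs
    nlinarith
  calc ∫ x in a..b, v x ^ 2 ≤ ∫ _ in a..b, (b - a) * N :=
        intervalIntegral.integral_mono_on hab ((hv.continuous.pow 2).intervalIntegrable _ _)
          intervalIntegrable_const hpointwise
    _ = (b - a) ^ 2 * N := by rw [intervalIntegral.integral_const, smul_eq_mul]; ring

theorem LipschitzWith.intervalIntegrable_deriv_sq {φ : ℝ → ℝ} {K : NNReal}
    (hφ : LipschitzWith K φ) (a b : ℝ) :
    IntervalIntegrable (fun x => deriv φ x ^ 2) volume a b := by
  refine (intervalIntegrable_const (c := (K : ℝ) ^ 2)).mono_fun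
    ((measurable_deriv φ).pow_const 2).aestronglyMeasurable (ae_of_all _ fun x => ?_)
  have := norm_deriv_le_of_lipschitz (x₀ := x) hφ
  simp only [norm_pow, Real.norm_eq_abs, abs_of_nonneg K.coe_nonneg] at this ⊢
  gcongr

theorem LipschitzWith.two_mul_sq_le_integral_deriv_sq {φ : ℝ → ℝ} {K : NNReal}
    (hφ : LipschitzWith K φ) (hm1 : φ (-1) = 0) (h1 : φ 1 = 0) :
    2 * φ 0 ^ 2 ≤ ∫ x in (-1:ℝ)..1, deriv φ x ^ 2 :=
  (hφ.lipschitzOnWith.absolutelyContinuousOnInterval).two_mul_sq_le_integral_deriv_sq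
    (hφ.intervalIntegrable_deriv_sq _ _) hm1 h1

theorem le_of_mem_BcSet {g ρp ρm r : ℝ} (hgρ : 0 ≤ g * (ρp - ρm)) (hr : r ∈ BcSet g ρp ρm) :
    r ≤ g * (ρp - ρm) / 2 := by
  obtain ⟨φ, ⟨K, hK⟩, hm1, h1, -, rfl⟩ := hr
  have hdir := hK.two_mul_sq_le_integral_deriv_sq hm1 h1
  rcases (intervalIntegral.integral_nonneg (by norm_num : (-1:ℝ) ≤ 1)
    fun x _ => sq_nonneg (deriv φ x)).eq_or_lt with h | h
  · rw [← h, div_zero]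
    positivity
  · rw [div_le_iff₀ h]
    nlinarith

theorem lipschitzWith_one_sub_abs : LipschitzWith 1 fun y : ℝ => 1 - |y| :=
  LipschitzWith.of_dist_le_mul fun x y => by
    rw [Real.dist_eq, Real.dist_eq, NNReal.coe_one, one_mul,
      show 1 - |x| - (1 - |y|) = |y| - |x| by ring, abs_sub_comm x y]
    exact abs_abs_sub_abs_le_abs_sub y x

theorem integral_sq_deriv_one_sub_abs :
    ∫ y in (-1:ℝ)..1, deriv (fun y : ℝ => 1 - |y|) y ^ 2 = 2 := by
  have hae : ∀ᵐ y : ℝ, y ∈ uIoc (-1:ℝ) 1 → deriv (fun y : ℝ => 1 - |y|) y ^ 2 = 1 := by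
    filter_upwards [Measure.ae_ne volume 0] with y hy _
    rw [deriv_const_sub, deriv_abs, neg_sq]
    rcases hy.lt_or_gt with hneg | hpos
    · simp [sign_neg hneg]
    · simp [sign_pos hpos]
  rw [intervalIntegral.integral_congr_ae hae]
  norm_num

theorem half_mem_BcSet (g ρp ρm : ℝ) : g * (ρp - ρm) / 2 ∈ BcSet g ρp ρm := by
  refine ⟨fun y => 1 - |y|, ⟨1, lipschitzWith_one_sub_abs⟩, by norm_num, by norm_num,
    fun hae => ?_, by rw [integral_sq_deriv_one_sub_abs]; norm_num⟩
  have := Measure.eqOn_Icc_of_ae_eq volume (by norm_num : (-1:ℝ) ≠ 1) hae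
    lipschitzWith_one_sub_abs.continuous.continuousOn continuousOn_const (x := 0) (by norm_num)
  norm_num at this

theorem sSup_BcSet {g ρp ρm : ℝ} (hgρ : 0 ≤ g * (ρp - ρm)) :
    sSup (BcSet g ρp ρm) = g * (ρp - ρm) / 2 :=
  IsGreatest.csSup_eq ⟨half_mem_BcSet g ρp ρm, fun _ => le_of_mem_BcSet hgρ⟩

/-- `√(y² + ε²)` smooths `|y|` at `0`, and the polynomial term bends the tent flat at `±1`. -/
def smoothTent (ε : ℝ) (n : ℕ) (y : ℝ) : ℝ :=
  √(1 + ε ^ 2) - √(y ^ 2 + ε ^ 2) - (1 - y ^ (2 * n + 2)) / ((2 * n + 2) * √(1 + ε ^ 2))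

namespace smoothTent

variable {ε : ℝ} {n : ℕ}

theorem hasDerivAt (hε : ε ≠ 0) (y : ℝ) :
    HasDerivAt (smoothTent ε n) (y ^ (2 * n + 1) / √(1 + ε ^ 2) - y / √(y ^ 2 + ε ^ 2)) y := by
  have hpos : 0 < y ^ 2 + ε ^ 2 := by positivity
  have hsqrt := ((hasDerivAt_pow 2 y).add_const (ε ^ 2)).sqrt hpos.ne'
  have hpoly := ((hasDerivAt_pow (2 * n + 2) y).const_sub 1).div_const
    ((2 * n + 2) * √(1 + ε ^ 2))
  refine (((hasDerivAt_const y √(1 + ε ^ 2)).sub hsqrt).sub hpoly).congr_deriv ?_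
  have : √(1 + ε ^ 2) ≠ 0 := by positivity
  rw [show 2 * n + 2 - 1 = 2 * n + 1 by omega]
  field_simp
  push_cast
  ring

theorem deriv_eq (hε : ε ≠ 0) :
    deriv (smoothTent ε n) = fun y => y ^ (2 * n + 1) / √(1 + ε ^ 2) - y / √(y ^ 2 + ε ^ 2) :=
  funext fun y => (hasDerivAt hε y).deriv

theorem contDiff (hε : ε ≠ 0) : ContDiff ℝ 2 (smoothTent ε n) := by
  unfold smoothTent
  have : ContDiff ℝ 2 fun y : ℝ => √(y ^ 2 + ε ^ 2) :=
    (contDiff_id.pow 2 |>.add contDiff_const).sqrt fun y => by positivity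
  fun_prop

theorem apply_one : smoothTent ε n 1 = 0 := by simp [smoothTent]

theorem apply_neg_one : smoothTent ε n (-1) = 0 := by
  simp [smoothTent, Even.neg_one_pow (⟨n + 1, by ring⟩ : Even (2 * n + 2))]

theorem deriv_one (hε : ε ≠ 0) : deriv (smoothTent ε n) 1 = 0 := by simp [deriv_eq hε]

theorem deriv_neg_one (hε : ε ≠ 0) : deriv (smoothTent ε n) (-1) = 0 := by
  simp [deriv_eq hε, Odd.neg_one_pow ⟨n, rfl⟩]

theorem sub_le_apply_zero (hε : 0 ≤ ε) : 1 - ε - 1 / (2 * n + 2) ≤ smoothTent ε n 0 := by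
  have ha : 1 ≤ √(1 + ε ^ 2) := Real.one_le_sqrt.2 (by nlinarith)
  have : 1 / ((2 * n + 2) * √(1 + ε ^ 2)) ≤ 1 / (2 * n + 2) :=
    one_div_le_one_div_of_le (by positivity) (le_mul_of_one_le_right (by positivity) ha)
  have h0 : smoothTent ε n 0 = √(1 + ε ^ 2) - ε - 1 / ((2 * n + 2) * √(1 + ε ^ 2)) := by
    simp [smoothTent, Real.sqrt_sq hε]
  linarith

theorem sq_deriv_le_one (hε : ε ≠ 0) {y : ℝ} (hy : y ∈ Icc (-1:ℝ) 1) :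
    deriv (smoothTent ε n) y ^ 2 ≤ 1 := by
  set a := √(1 + ε ^ 2)
  set s := √(y ^ 2 + ε ^ 2)
  have hy2 : y ^ 2 ≤ 1 := by nlinarith [hy.1, hy.2]
  have hs : 0 < s := by positivity
  have hsa : s ≤ a := Real.sqrt_le_sqrt (by linarith)
  have hs2 : s ^ 2 = y ^ 2 + ε ^ 2 := Real.sq_sqrt (by positivity)
  have hpow : 0 ≤ y ^ (2 * n) ∧ y ^ (2 * n) ≤ 1 := by
    rw [pow_mul]; exact ⟨by positivity, pow_le_one₀ (sq_nonneg y) hy2⟩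
  -- the derivative is `-y c` with `0 ≤ c ≤ 1/s`
  have hc₁ : y ^ (2 * n) / a ≤ 1 / s :=
    (div_le_div_of_nonneg_right hpow.2 (hs.trans_le hsa).le).trans
      (one_div_le_one_div_of_le hs hsa)
  have hc₀ : 0 ≤ y ^ (2 * n) / a := div_nonneg hpow.1 (hs.trans_le hsa).le
  have hfactor : deriv (smoothTent ε n) y = -y * (1 / s - y ^ (2 * n) / a) := by
    rw [deriv_eq hε]; ring
  calc deriv (smoothTent ε n) y ^ 2 = y ^ 2 * (1 / s - y ^ (2 * n) / a) ^ 2 := by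
        rw [hfactor]; ring
    _ ≤ y ^ 2 * (1 / s) ^ 2 := by gcongr; linarith
    _ = y ^ 2 / (y ^ 2 + ε ^ 2) := by rw [← hs2]; ring
    _ ≤ 1 := div_le_one_of_le₀ (by nlinarith) (by positivity)

theorem integral_sq_deriv_le_two (hε : ε ≠ 0) :
    ∫ y in (-1:ℝ)..1, deriv (smoothTent ε n) y ^ 2 ≤ 2 := by
  calc ∫ y in (-1:ℝ)..1, deriv (smoothTent ε n) y ^ 2 ≤ ∫ _ in (-1:ℝ)..1, (1:ℝ) :=
        intervalIntegral.integral_mono_on (by norm_num)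
          (((contDiff hε).continuous_deriv (by norm_num)).pow 2 |>.intervalIntegrable _ _)
          intervalIntegrable_const fun y hy => sq_deriv_le_one hε hy
    _ = 2 := by norm_num

theorem exists_apply_zero_gt {t : ℝ} (ht : 0 < t) :
    ∃ ε ≠ 0, ∃ n, 1 - t < smoothTent ε n 0 := by
  obtain ⟨n, hn⟩ := exists_nat_one_div_lt (half_pos ht)
  refine ⟨t / 2, by positivity, n, lt_of_lt_of_le ?_ (sub_le_apply_zero (by positivity))⟩
  have : 1 / (2 * (n:ℝ) + 2) < 1 / ((n:ℝ) + 1) :=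
    one_div_lt_one_div_of_lt (by positivity) (by linarith)
  linarith

end smoothTent

section XivcSet

variable {g ρp ρm b r : ℝ}

theorem nonneg_of_mem_XivcSet (hr : r ∈ XivcSet g ρp ρm b) : 0 ≤ r := by
  obtain ⟨φ, -, -, -, -, -, hD, rfl⟩ := hr
  have := intervalIntegral.integral_nonneg (μ := volume) (by norm_num : (-1:ℝ) ≤ 1)
    fun x _ => sq_nonneg (deriv (deriv φ) x)
  positivity

theorem le_of_mem_XivcSet (hgρ : 0 ≤ g * (ρp - ρm)) (hr : r ∈ XivcSet g ρp ρm b) :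
    b ^ 2 / (2 * (g * (ρp - ρm)) - 4 * b ^ 2) ≤ r := by
  obtain ⟨φ, hφ, hm1, h1, hdm1, -, hD, rfl⟩ := hr
  set G := g * (ρp - ρm)
  set I := ∫ y in (-1:ℝ)..1, deriv φ y ^ 2
  set N := ∫ y in (-1:ℝ)..1, deriv (deriv φ) y ^ 2
  have hφ1 : ContDiff ℝ 1 (deriv φ) := hφ.deriv'
  have hdir : 2 * φ 0 ^ 2 ≤ I :=
    (hφ.contDiffOn.of_le (by norm_num)).absolutelyContinuousOnInterval
      |>.two_mul_sq_le_integral_deriv_sq ((hφ1.continuous.pow 2).intervalIntegrable _ _) hm1 h1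
  have hpoinc : I ≤ 4 * N := by
    have := integral_sq_le_sq_mul_integral_deriv_sq (b := 1) (by norm_num) hφ1 hdm1
    norm_num at this
    exact this
  have hN : 0 ≤ N := intervalIntegral.integral_nonneg (by norm_num) fun x _ => sq_nonneg _
  have hI : 0 ≤ I := intervalIntegral.integral_nonneg (by norm_num) fun x _ => sq_nonneg _
  have hstep : G * φ 0 ^ 2 - b ^ 2 * I ≤ (2 * G - 4 * b ^ 2) * I / 4 := by
    nlinarith [mul_le_mul_of_nonneg_left hdir hgρ]
  have hcoef : 0 < 2 * G - 4 * b ^ 2 := by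
    by_contra! h
    nlinarith [mul_nonpos_of_nonpos_of_nonneg h hI]
  have hDle : G * φ 0 ^ 2 - b ^ 2 * I ≤ (2 * G - 4 * b ^ 2) * N :=
    hstep.trans (by nlinarith [mul_le_mul_of_nonneg_left hpoinc hcoef.le])
  have hNpos : 0 < N := pos_of_mul_pos_right (hD.trans_le hDle) hcoef.le
  calc b ^ 2 / (2 * G - 4 * b ^ 2) = b ^ 2 * N / ((2 * G - 4 * b ^ 2) * N) :=
        (mul_div_mul_right _ _ hNpos.ne').symm
    _ ≤ b ^ 2 * N / (G * φ 0 ^ 2 - b ^ 2 * I) := div_le_div_of_nonneg_left (by positivity) hD hDle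

theorem smoothTent_quotient_mem_XivcSet {ε : ℝ} (hε : ε ≠ 0) {n : ℕ}
    (hD : 0 < g * (ρp - ρm) * smoothTent ε n 0 ^ 2
      - b ^ 2 * ∫ y in (-1:ℝ)..1, deriv (smoothTent ε n) y ^ 2) :
    (b ^ 2 * ∫ y in (-1:ℝ)..1, deriv (deriv (smoothTent ε n)) y ^ 2) /
      (g * (ρp - ρm) * smoothTent ε n 0 ^ 2
        - b ^ 2 * ∫ y in (-1:ℝ)..1, deriv (smoothTent ε n) y ^ 2) ∈ XivcSet g ρp ρm b :=
  ⟨_, smoothTent.contDiff hε, smoothTent.apply_neg_one, smoothTent.apply_one,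
    smoothTent.deriv_neg_one hε, smoothTent.deriv_one hε, hD, rfl⟩

theorem XivcSet_nonempty (hb : 2 * b ^ 2 < g * (ρp - ρm)) : (XivcSet g ρp ρm b).Nonempty := by
  set G := g * (ρp - ρm)
  have hG : 0 < G := by nlinarith
  set t := (G - 2 * b ^ 2) / (2 * G)
  have ht : 0 < t := div_pos (by linarith) (by positivity)
  have ht1 : 2 * G * t = G - 2 * b ^ 2 := by simp only [t]; field_simp
  obtain ⟨ε, hε, n, hφ0⟩ := smoothTent.exists_apply_zero_gt ht
  have hI := smoothTent.integral_sq_deriv_le_two (n := n) hε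
  refine ⟨_, smoothTent_quotient_mem_XivcSet (n := n) hε ?_⟩
  have ht_le : 0 ≤ 1 - t := by nlinarith
  refine sub_pos.2 (calc
    b ^ 2 * ∫ y in (-1:ℝ)..1, deriv (smoothTent ε n) y ^ 2 ≤ b ^ 2 * 2 := by gcongr
    _ = G * (1 - 2 * t) := by linarith
    _ ≤ G * (1 - t) ^ 2 := by gcongr; nlinarith
    _ < G * smoothTent ε n 0 ^ 2 := by gcongr)

theorem tendsto_sInf_XivcSet_nhds_zero (hgρ : 0 < g * (ρp - ρm)) :
    Tendsto (fun b => sInf (XivcSet g ρp ρm b)) (𝓝 0) (𝓝 0) := by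
  obtain ⟨ε, hε, n, hφ0⟩ := smoothTent.exists_apply_zero_gt one_pos
  set φ := smoothTent ε n
  set I := ∫ y in (-1:ℝ)..1, deriv φ y ^ 2
  set N := ∫ y in (-1:ℝ)..1, deriv (deriv φ) y ^ 2
  have hden : Tendsto (fun b : ℝ => g * (ρp - ρm) * φ 0 ^ 2 - b ^ 2 * I) (𝓝 0)
      (𝓝 (g * (ρp - ρm) * φ 0 ^ 2)) := by
    simpa using ((continuous_pow 2).tendsto (0:ℝ)).mul_const I |>.const_sub _
  have hD0 : 0 < g * (ρp - ρm) * φ 0 ^ 2 := by simp at hφ0; positivity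
  have hquot : Tendsto (fun b : ℝ => b ^ 2 * N / (g * (ρp - ρm) * φ 0 ^ 2 - b ^ 2 * I)) (𝓝 0)
      (𝓝 0) := by
    have : ContinuousAt (fun b : ℝ => b ^ 2 * N / (g * (ρp - ρm) * φ 0 ^ 2 - b ^ 2 * I)) 0 :=
      ContinuousAt.div (by fun_prop) (by fun_prop) (by simpa using hD0.ne')
    simpa using this.tendsto
  refine tendsto_of_tendsto_of_tendsto_of_le_of_le' tendsto_const_nhds hquot
    (Eventually.of_forall fun b => Real.sInf_nonneg fun _ => nonneg_of_mem_XivcSet) ?_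
  filter_upwards [hden.eventually (lt_mem_nhds hD0)] with b hb
  exact csInf_le ⟨0, fun _ => nonneg_of_mem_XivcSet⟩ (smoothTent_quotient_mem_XivcSet hε hb)

theorem tendsto_sInf_XivcSet_atTop {c : ℝ} (hgρ : 0 < g * (ρp - ρm))
    (hc : c ^ 2 = g * (ρp - ρm) / 2) :
    Tendsto (fun b => sInf (XivcSet g ρp ρm b)) (𝓝[Ioo 0 c] c) atTop := by
  have hgap : Tendsto (fun b => 4 * (c ^ 2 - b ^ 2)) (𝓝[Ioo 0 c] c) (𝓝[>] 0) := by
    refine tendsto_nhdsWithin_of_tendsto_nhds_of_eventually_within _ ?_ ?_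
    · have := ((continuous_pow 2).tendsto c).const_sub (c ^ 2) |>.const_mul 4
      simpa using this.mono_left nhdsWithin_le_nhds
    · filter_upwards [self_mem_nhdsWithin] with b hb
      have : b ^ 2 < c ^ 2 := pow_lt_pow_left₀ hb.2 hb.1.le two_ne_zero
      simp only [mem_Ioi]; linarith
  have hbound : Tendsto (fun b => b ^ 2 * (4 * (c ^ 2 - b ^ 2))⁻¹) (𝓝[Ioo 0 c] c) atTop :=
    Tendsto.pos_mul_atTop (by rw [hc]; positivity)
      (((continuous_pow 2).tendsto c).mono_left nhdsWithin_le_nhds) hgap.inv_tendsto_nhdsGT_zero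
  refine tendsto_atTop_mono' _ ?_ hbound
  filter_upwards [self_mem_nhdsWithin] with b hb
  have hbc : 2 * b ^ 2 < g * (ρp - ρm) := by nlinarith [pow_lt_pow_left₀ hb.2 hb.1.le two_ne_zero]
  refine le_csInf (XivcSet_nonempty hbc) fun r hr => ?_
  refine le_trans (le_of_eq ?_) (le_of_mem_XivcSet hgρ.le hr)
  rw [hc]
  ring

end XivcSet

theorem vertical_critical_frequency_limits_general
    (ρp ρm g Bc : ℝ)
    (hρ : ρm < ρp) (hg : 0 < g)
    (hBcsq : Bc ^ 2 = sSup (BcSet g ρp ρm)) :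
    ∀ f : ℝ → ℝ,
      (∀ b : ℝ, 0 < b → b < Bc → 0 ≤ f b ∧ (f b) ^ 2 = sInf (XivcSet g ρp ρm b)) →
      Tendsto f (𝓝[Ioo (0:ℝ) Bc] 0) (𝓝 0) ∧
      Tendsto f (𝓝[Ioo (0:ℝ) Bc] Bc) atTop := by
  intro f hf
  have hgρ : 0 < g * (ρp - ρm) := mul_pos hg (sub_pos.2 hρ)
  have hf_eq : ∀ x, f =ᶠ[𝓝[Ioo 0 Bc] x] fun b => √(sInf (XivcSet g ρp ρm b)) := fun x => by
    filter_upwards [self_mem_nhdsWithin] with b ⟨hb0, hbc⟩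
    rw [← (hf b hb0 hbc).2, Real.sqrt_sq (hf b hb0 hbc).1]
  constructor
  · refine Tendsto.congr' (hf_eq 0).symm ?_
    simpa using ((tendsto_sInf_XivcSet_nhds_zero hgρ).mono_left nhdsWithin_le_nhds).sqrt
  · exact (Real.tendsto_sqrt_atTop.comp (tendsto_sInf_XivcSet_atTop hgρ
      (hBcsq.trans (sSup_BcSet hgρ.le)))).congr' (hf_eq Bc).symm

/-- as a function of `B ∈ (0, |B|_c)`, the vertical critical frequency tends to
`0` as `B → 0⁺` and to `+∞` as `B → |B|_c⁻`. -/
theorem vertical_critical_frequency_limits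
    (ρp ρm g Bc : ℝ)
    (hρm : 0 < ρm) (hρ : ρm < ρp) (hg : 0 < g)
    (hBc : 0 < Bc) (hBcsq : Bc ^ 2 = sSup (BcSet g ρp ρm)) :
    ∀ f : ℝ → ℝ,
      (∀ b : ℝ, 0 < b → b < Bc → 0 ≤ f b ∧ (f b) ^ 2 = sInf (XivcSet g ρp ρm b)) →
      Tendsto f (𝓝[Ioo (0:ℝ) Bc] 0) (𝓝 0) ∧
      Tendsto f (𝓝[Ioo (0:ℝ) Bc] Bc) atTop :=
  vertical_critical_frequency_limits_general ρp ρm g Bc hρ hg hBcsq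

end
end
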